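/- arXiv:1106.3670 — 8 statements merged into one kernel-verified Lean document; each statement's English description precedes it below -/
import Mathlib

section
/- Let P_{ij}, for i = 1,...,m and j = 1,...,n, be i.i.d. uniform random variables on [0,1] (all hypotheses null). Family i is selected if min_j P_{ij} < q, and within a selected family a type I error occurs (V_i ≥ 1) if min_j P_{ij} < q/n. Then the expected average over the selected families of the indicator I{V_i ≥ 1} (defined as 0 when no family is selected) equals (1 - (1 - q/n)^n) · (1 - (1-q)^{nm}) / (1 - (1-q)^n). -/
open MeasureTheory
open scoped Classical

/-!
Each family's outcome is one of three events: not selected, selected without error, or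
selected with an error (`E ⊆ S`), and the families are independent, so the expectation is a
finite sum over outcome patterns weighted by products of the three probabilities. Writing
`1/k = ∫₀¹ z^(k-1) dz` turns that sum into the integral of a generating function: by symmetry
it is `m · P(E) · (P(Sᶜ) + P(S) z)^(m-1)`, which integrates to
`P(E) (1 - P(Sᶜ)^m) / P(S)`. For uniform p-values `P(S) = 1 - (1-q)^n` and
`P(E) = 1 - (1-q/n)^n`.
-/

open Finset

lemma div_max_one_eq_intervalIntegral (t k : ℕ) (h : k = 0 → t = 0) :
    (t : ℝ) / ((max k 1 : ℕ) : ℝ) = ∫ z in (0 : ℝ)..1, (t : ℝ) * z ^ (k - 1) := by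
  rcases Nat.eq_zero_or_pos k with rfl | hk
  · simp [h rfl]
  · rw [intervalIntegral.integral_const_mul, integral_pow, Nat.sub_add_cancel hk,
      max_eq_left hk, Nat.cast_sub hk]
    simp [zero_pow hk.ne', div_eq_mul_inv]

section OutcomePatterns

variable {ι : Type*} [Fintype ι]

def errorCount (v : ι → Option Bool) : ℕ := #{i | v i = some true}

def selectedCount (v : ι → Option Bool) : ℕ := #{i | (v i).isSome}

lemma errorCount_le_selectedCount (v : ι → Option Bool) : errorCount v ≤ selectedCount v :=
  card_le_card fun i => by simp_all

lemma selectedCount_sub_one {v : ι → Option Bool} {i : ι} (hi : v i = some true) :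
    selectedCount v - 1 = #{j ∈ univ.erase i | (v j).isSome} := by
  rw [selectedCount, filter_erase, card_erase_of_mem (by simp [hi])]

lemma sum_errorCount_mul_pow_selectedCount (w : Option Bool → ℝ) (z : ℝ) :
    ∑ v : ι → Option Bool, (errorCount v : ℝ) * z ^ (selectedCount v - 1) * ∏ i, w (v i) =
      Fintype.card ι * w (some true) *
        (w none + (w (some false) + w (some true)) * z) ^ (Fintype.card ι - 1) := by
  set A := w none + (w (some false) + w (some true)) * z
  -- with family `i` in error, every other selected family contributes a factor `z`
  set F : ι → ι → Option Bool → ℝ := fun i j b =>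
    if j = i then (if b = some true then w (some true) else 0)
    else w b * (if b.isSome then z else 1)
  have h_self (i : ι) (b : Option Bool) :
      F i i b = if b = some true then w (some true) else 0 := if_pos rfl
  have h_other {i j : ι} (hj : j ∈ univ.erase i) (b : Option Bool) :
      F i j b = w b * (if b.isSome then z else 1) := if_neg (ne_of_mem_erase hj)
  have h_term (v : ι → Option Bool) (i : ι) :
      (if v i = some true then 1 else 0) * z ^ (selectedCount v - 1) * ∏ j, w (v j) =
        ∏ j, F i j (v j) := by
    rw [← mul_prod_erase univ (fun j => F i j (v j)) (mem_univ i), h_self,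
      prod_congr rfl fun j hj => h_other hj (v j)]
    split_ifs with hi
    · rw [← mul_prod_erase univ _ (mem_univ i), prod_mul_distrib, prod_ite, prod_const,
        prod_const_one, selectedCount_sub_one hi, hi]
      ring
    · simp
  have h_factor {i j : ι} (hj : j ∈ univ.erase i) : ∑ b, F i j b = A := by
    simp only [h_other hj, Fintype.sum_option, Fintype.sum_bool, Option.isSome_none,
      Option.isSome_some, if_true, Bool.false_eq_true, if_false, A]
    ring
  have h_errorCount (v : ι → Option Bool) :
      (errorCount v : ℝ) = ∑ i, if v i = some true then 1 else 0 := by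
    rw [sum_boole, errorCount]
  calc ∑ v : ι → Option Bool, (errorCount v : ℝ) * z ^ (selectedCount v - 1) * ∏ i, w (v i)
      = ∑ i, ∑ v : ι → Option Bool, ∏ j, F i j (v j) := by
        simp_rw [h_errorCount, sum_mul, h_term]
        exact sum_comm
    _ = ∑ i, ∏ j, ∑ b, F i j b := by simp_rw [Fintype.prod_sum]
    _ = ∑ _ : ι, w (some true) * A ^ (Fintype.card ι - 1) := by
        refine sum_congr rfl fun i _ => ?_
        rw [← mul_prod_erase univ _ (mem_univ i), prod_congr rfl fun j => h_factor, prod_const,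
          card_erase_of_mem (mem_univ i), card_univ]
        simp [h_self]
    _ = _ := by simp [mul_assoc]

lemma sum_errorCount_div_selectedCount (w : Option Bool → ℝ)
    (hw : w (some false) + w (some true) ≠ 0) :
    ∑ v : ι → Option Bool,
        (errorCount v : ℝ) / ((max (selectedCount v) 1 : ℕ) : ℝ) * ∏ i, w (v i) =
      w (some true) * ((w none + (w (some false) + w (some true))) ^ Fintype.card ι -
        w none ^ Fintype.card ι) / (w (some false) + w (some true)) := by
  set c := w (some false) + w (some true)
  have h_integral (v : ι → Option Bool) :
      (errorCount v : ℝ) / ((max (selectedCount v) 1 : ℕ) : ℝ) * ∏ i, w (v i) =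
        ∫ z in (0 : ℝ)..1,
          (errorCount v : ℝ) * z ^ (selectedCount v - 1) * ∏ i, w (v i) := by
    rw [intervalIntegral.integral_mul_const, ← div_max_one_eq_intervalIntegral]
    have := errorCount_le_selectedCount v
    omega
  have h_antideriv (z : ℝ) :
      HasDerivAt (fun z => w (some true) * (w none + c * z) ^ Fintype.card ι / c)
        (Fintype.card ι * w (some true) * (w none + c * z) ^ (Fintype.card ι - 1)) z := by
    have h_lin : HasDerivAt (fun z => w none + c * z) c z := by
      simpa using ((hasDerivAt_id z).const_mul c).const_add (w none)
    refine (((h_lin.pow _).const_mul _).div_const c).congr_deriv ?_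
    field_simp
  simp_rw [h_integral]
  rw [← intervalIntegral.integral_finsetSum fun v _ => by
      apply Continuous.intervalIntegrable; fun_prop]
  simp_rw [sum_errorCount_mul_pow_selectedCount]
  rw [intervalIntegral.integral_eq_sub_of_hasDerivAt (fun z _ => h_antideriv z)
    (by apply Continuous.intervalIntegrable; fun_prop)]
  ring

lemma integral_comp_pi_eq_sum {α β : Type*} [MeasurableSpace α] [Fintype β]
    (ν : Measure α) [IsFiniteMeasure ν] {f : α → β} (hf : ∀ b, MeasurableSet (f ⁻¹' {b}))
    (g : (ι → β) → ℝ) :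
    ∫ x, g (fun i => f (x i)) ∂Measure.pi (fun _ : ι => ν) =
      ∑ v, g v * ∏ i, ν.real (f ⁻¹' {v i}) := by
  set fiber : (ι → β) → Set (ι → α) := fun v => Set.univ.pi fun i => f ⁻¹' {v i}
  have h_fiber (v : ι → β) : MeasurableSet (fiber v) := .univ_pi fun i => hf (v i)
  have h_decomp (x : ι → α) :
      g (fun i => f (x i)) = ∑ v, (fiber v).indicator (fun _ => g v) x := by
    rw [sum_eq_single (fun i => f (x i)) (fun v _ hv => Set.indicator_of_notMem ?_ _)
      (by simp), Set.indicator_of_mem (by simp [fiber])]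
    simp only [fiber, Set.mem_univ_pi, Set.mem_preimage, Set.mem_singleton_iff]
    exact fun h => hv (funext h).symm
  simp_rw [h_decomp]
  rw [integral_finsetSum _ fun v _ => (integrable_const _).indicator (h_fiber v)]
  refine sum_congr rfl fun v _ => ?_
  rw [integral_indicator_const _ (h_fiber v), smul_eq_mul, mul_comm, measureReal_def,
    Measure.pi_pi, ENNReal.toReal_prod]
  rfl

section FamilyOutcome

variable {α : Type*} {S E : Set α}

-- `none`: not selected; `some b`: selected, `b` recording whether a type I error occurred
noncomputable def familyOutcome (S E : Set α) (y : α) : Option Bool :=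
  if y ∈ S then some (decide (y ∈ E)) else none

lemma preimage_familyOutcome_none : familyOutcome S E ⁻¹' {none} = Sᶜ := by
  ext y; by_cases y ∈ S <;> simp_all [familyOutcome]

lemma preimage_familyOutcome_some_true : familyOutcome S E ⁻¹' {some true} = S ∩ E := by
  ext y; by_cases y ∈ S <;> simp_all [familyOutcome]

lemma preimage_familyOutcome_some_false : familyOutcome S E ⁻¹' {some false} = S \ E := by
  ext y; by_cases y ∈ S <;> simp_all [familyOutcome]

lemma measurableSet_preimage_familyOutcome [MeasurableSpace α] (hS : MeasurableSet S)
    (hE : MeasurableSet E) (b : Option Bool) : MeasurableSet (familyOutcome S E ⁻¹' {b}) := by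
  rcases b with _ | _ | _
  · rw [preimage_familyOutcome_none]; exact hS.compl
  · rw [preimage_familyOutcome_some_false]; exact hS.diff hE
  · rw [preimage_familyOutcome_some_true]; exact hS.inter hE

lemma errorCount_familyOutcome (hES : E ⊆ S) (x : ι → α) :
    errorCount (fun i => familyOutcome S E (x i)) = #{i | x i ∈ E} := by
  refine congrArg card (filter_congr fun i _ => ?_)
  by_cases hE : x i ∈ E
  · simp [familyOutcome, hE, hES hE]
  · simp [familyOutcome, hE]

lemma selectedCount_familyOutcome (x : ι → α) :
    selectedCount (fun i => familyOutcome S E (x i)) = #{i | x i ∈ S} := by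
  refine congrArg card (filter_congr fun i _ => ?_)
  by_cases hS : x i ∈ S <;> simp [familyOutcome, hS]

end FamilyOutcome

theorem integral_card_mem_div_card_mem_pi {α : Type*} [MeasurableSpace α] (ν : Measure α)
    [IsProbabilityMeasure ν] {S E : Set α} (hS : MeasurableSet S) (hE : MeasurableSet E)
    (hES : E ⊆ S) (hν : ν.real S ≠ 0) :
    ∫ x : ι → α, (#{i | x i ∈ E} : ℝ) / ((max #{i | x i ∈ S} 1 : ℕ) : ℝ)
        ∂Measure.pi (fun _ => ν) =
      ν.real E * (1 - (1 - ν.real S) ^ Fintype.card ι) / ν.real S := by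
  have h_none : ν.real (familyOutcome S E ⁻¹' {none}) = 1 - ν.real S := by
    rw [preimage_familyOutcome_none, measureReal_compl hS, probReal_univ]
  have h_true : ν.real (familyOutcome S E ⁻¹' {some true}) = ν.real E := by
    rw [preimage_familyOutcome_some_true, Set.inter_eq_right.mpr hES]
  have h_false : ν.real (familyOutcome S E ⁻¹' {some false}) = ν.real S - ν.real E := by
    rw [preimage_familyOutcome_some_false, measureReal_sdiff hES hE]
  simp_rw [← errorCount_familyOutcome hES, ← selectedCount_familyOutcome (E := E)]
  rw [integral_comp_pi_eq_sum ν (measurableSet_preimage_familyOutcome hS hE)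
      fun v => (errorCount v : ℝ) / ((max (selectedCount v) 1 : ℕ) : ℝ),
    sum_errorCount_div_selectedCount (fun b => ν.real (familyOutcome S E ⁻¹' {b}))
      (by rwa [h_false, h_true, sub_add_cancel]),
    h_none, h_true, h_false]
  ring

end OutcomePatterns

instance : IsProbabilityMeasure (volume.restrict (Set.Icc (0 : ℝ) 1)) :=
  ⟨by simp⟩

section Uniform

variable {ι : Type*}

lemma setOf_exists_lt_eq_compl_pi (c : ℝ) :
    {y : ι → ℝ | ∃ j, y j < c} = (Set.univ.pi fun _ => Set.Ici c)ᶜ := by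
  ext y; simp [Pi.le_def]

variable [Fintype ι]

lemma measurableSet_setOf_exists_lt (c : ℝ) : MeasurableSet {y : ι → ℝ | ∃ j, y j < c} := by
  rw [setOf_exists_lt_eq_compl_pi]
  exact (MeasurableSet.univ_pi fun _ => measurableSet_Ici).compl

lemma measureReal_setOf_exists_lt_uniform {c : ℝ} (h0 : 0 ≤ c) (h1 : c ≤ 1) :
    (Measure.pi fun _ : ι => volume.restrict (Set.Icc (0 : ℝ) 1)).real {y | ∃ j, y j < c} =
      1 - (1 - c) ^ Fintype.card ι := by
  rw [setOf_exists_lt_eq_compl_pi, measureReal_compl (.univ_pi fun _ => measurableSet_Ici),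
    probReal_univ, measureReal_def, Measure.pi_pi]
  have h_inter : Set.Ici c ∩ Set.Icc 0 1 = Set.Icc c 1 :=
    Set.ext fun t => ⟨fun h => ⟨h.1, h.2.2⟩, fun h => ⟨h.1, h0.trans h.1, h.2⟩⟩
  simp [Measure.restrict_apply measurableSet_Ici, h_inter, h1]

end Uniform

theorem stmt1_general (m n : ℕ) (hn : 1 ≤ n) (q : ℝ) (hq0 : 0 < q) (hq1 : q < 1) :
    ∫ x : Fin m → Fin n → ℝ,
      (∑ i ∈ Finset.univ.filter (fun i : Fin m => ∃ j, x i j < q),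
        (if ∃ j, x i j < q / n then (1 : ℝ) else 0)) /
      ((max (Finset.univ.filter (fun i : Fin m => ∃ j, x i j < q)).card 1 : ℕ) : ℝ)
      ∂ Measure.pi (fun _ : Fin m => Measure.pi (fun _ : Fin n =>
          volume.restrict (Set.Icc (0 : ℝ) 1)))
    = (1 - (1 - q / n) ^ n) * (1 - (1 - q) ^ (n * m)) / (1 - (1 - q) ^ n) := by
  have hqn : q / n ≤ q := div_le_self hq0.le (by exact_mod_cast hn)
  have hES : {y : Fin n → ℝ | ∃ j, y j < q / n} ⊆ {y | ∃ j, y j < q} :=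
    fun y ⟨j, hj⟩ => ⟨j, hj.trans_le hqn⟩
  have h_errors (x : Fin m → Fin n → ℝ) :
      ∑ i ∈ univ.filter (fun i : Fin m => ∃ j, x i j < q),
        (if ∃ j, x i j < q / n then (1 : ℝ) else 0) = #{i | ∃ j, x i j < q / n} := by
    rw [sum_boole, filter_filter]
    exact congrArg _ (congrArg card (filter_congr fun i _ => and_iff_right_of_imp (@hES (x i))))
  have hν : (Measure.pi fun _ : Fin n => volume.restrict (Set.Icc (0 : ℝ) 1)).real
      {y | ∃ j, y j < q} ≠ 0 := by
    rw [measureReal_setOf_exists_lt_uniform hq0.le hq1.le, Fintype.card_fin]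
    exact sub_ne_zero.mpr (pow_lt_one₀ (by linarith) (by linarith) (by omega)).ne'
  have h_integral := integral_card_mem_div_card_mem_pi (ι := Fin m) _
    (measurableSet_setOf_exists_lt q) (measurableSet_setOf_exists_lt (q / n)) hES hν
  simp only [Set.mem_ofPred_eq] at h_integral
  simp_rw [h_errors]
  rw [h_integral, measureReal_setOf_exists_lt_uniform hq0.le hq1.le,
    measureReal_setOf_exists_lt_uniform (by positivity) (by linarith), Fintype.card_fin,
    Fintype.card_fin, sub_sub_cancel, pow_mul]

/-- The closed form of Appendix A: with `m` all-null families of `n` i.i.d. Uniform(0,1)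
p-values, a family is selected when its minimal p-value is below `q`, and a type I error
occurs in it (under Bonferroni at level `q`) when its minimal p-value is below `q/n`.
The expected average over the selected families of `I{V_i ≥ 1}` (taken as 0 when no
family is selected) equals `(1-(1-q/n)^n)(1-(1-q)^{nm})/(1-(1-q)^n)`. -/
theorem stmt1 (m n : ℕ) (hm : 1 ≤ m) (hn : 1 ≤ n) (q : ℝ) (hq0 : 0 < q) (hq1 : q < 1) :
    ∫ x : Fin m → Fin n → ℝ,
      (∑ i ∈ Finset.univ.filter (fun i : Fin m => ∃ j, x i j < q),
        (if ∃ j, x i j < q / n then (1 : ℝ) else 0)) /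
      ((max (Finset.univ.filter (fun i : Fin m => ∃ j, x i j < q)).card 1 : ℕ) : ℝ)
      ∂ Measure.pi (fun _ : Fin m => Measure.pi (fun _ : Fin n =>
          volume.restrict (Set.Icc (0 : ℝ) 1)))
    = (1 - (1 - q / n) ^ n) * (1 - (1 - q) ^ (n * m)) / (1 - (1 - q) ^ n) :=
  stmt1_general m n hn q hq0 hq1
end

section
/- Any step-up multiple testing procedure defines a simple selection rule: if hypothesis H_{0i} with p-value P_i is rejected by the step-up procedure with nondecreasing critical values α_1 ≤ ... ≤ α_m, then for any other value P_i' of the i-th p-value (the other p-values held fixed) such that H_{0i} is still rejected, the total number of rejections is unchanged. -/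
/-- The number of rejections of the step-up procedure with critical values
`α 1 ≤ … ≤ α m` on p-values `p`: the largest `j ≤ m` such that the `j`-th order
statistic satisfies `p_(j) ≤ α j`, i.e. at least `j` of the p-values are `≤ α j`. -/
noncomputable def stepUpCount (m : ℕ) (α : ℕ → ℝ) (p : Fin m → ℝ) : ℕ :=
  sSup {j | j ≤ m ∧ j ≤ (Finset.univ.filter fun i => p i ≤ α j).card}

lemma stepUpCount_le_aux (m : ℕ) (α : ℕ → ℝ) (p p' : Fin m → ℝ) (i : Fin m)
    (hdiff : ∀ j, j ≠ i → p' j = p j)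
    (h : p' i ≤ α (stepUpCount m α p)) :
    stepUpCount m α p ≤ stepUpCount m α p' := by
  have hbdd : ∀ q : Fin m → ℝ, BddAbove {j | j ≤ m ∧ j ≤ (Finset.univ.filter fun i => q i ≤ α j).card} :=
    fun q => ⟨m, fun j hj => hj.1⟩
  have hne : ({j | j ≤ m ∧ j ≤ (Finset.univ.filter fun i => p i ≤ α j).card} : Set ℕ).Nonempty :=
    ⟨0, by simp⟩
  have hk := Nat.sSup_mem hne (hbdd p)
  set k := stepUpCount m α p with hkdef
  apply le_csSup (hbdd p')
  refine ⟨hk.1, hk.2.trans (Finset.card_le_card ?_)⟩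
  intro l hl
  simp only [Finset.mem_filter, Finset.mem_univ, true_and] at hl ⊢
  by_cases hli : l = i
  · subst hli; exact h
  · rw [hdiff l hli]; exact hl

/-- A step-up procedure defines a simple selection rule: if `H_{0i}` is rejected
(`stepUpCount ≥ 1` and `p i ≤ α` at the rejection count), and `p i` is changed to any
other value `p' i` for which `H_{0i}` is still rejected (the other p-values fixed),
then the total number of rejections is unchanged. -/
theorem stmt3 (m : ℕ) (α : ℕ → ℝ) (hα : Monotone α) (p p' : Fin m → ℝ) (i : Fin m)
    (hdiff : ∀ j, j ≠ i → p' j = p j)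
    (hrej : 1 ≤ stepUpCount m α p ∧ p i ≤ α (stepUpCount m α p))
    (hrej' : 1 ≤ stepUpCount m α p' ∧ p' i ≤ α (stepUpCount m α p')) :
    stepUpCount m α p' = stepUpCount m α p := by
  have hdiff' : ∀ j, j ≠ i → p j = p' j := fun j hj => (hdiff j hj).symm
  rcases le_total (stepUpCount m α p) (stepUpCount m α p') with h | h
  · exact le_antisymm
      (stepUpCount_le_aux m α p' p i hdiff' (hrej.2.trans (hα h)))
      h
  · exact le_antisymm h
      (stepUpCount_le_aux m α p p' i hdiff (hrej'.2.trans (hα h)))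
end

section
/- Any step-down multiple testing procedure defines a simple selection rule: if H_{0i} is rejected by the step-down procedure with critical values α_1 ≤ ... ≤ α_m, then changing only P_i to any other value for which H_{0i} is still rejected leaves the total number of rejections unchanged. -/
/-- The number of rejections of the step-down procedure with critical values
`α 1 ≤ … ≤ α m` on p-values `p`: the largest `j ≤ m` such that for every `1 ≤ s ≤ j`
the `s`-th order statistic satisfies `p_(s) ≤ α s`, i.e. at least `s` of the p-values
are `≤ α s`. -/
noncomputable def stepDownCount (m : ℕ) (α : ℕ → ℝ) (p : Fin m → ℝ) : ℕ :=
  sSup {j | j ≤ m ∧ ∀ s, 1 ≤ s → s ≤ j → s ≤ (Finset.univ.filter fun i => p i ≤ α s).card}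

lemma stepDownCount_mem (m : ℕ) (α : ℕ → ℝ) (p : Fin m → ℝ) :
    stepDownCount m α p ∈
      {j | j ≤ m ∧ ∀ s, 1 ≤ s → s ≤ j → s ≤ (Finset.univ.filter fun i => p i ≤ α s).card} := by
  apply Nat.sSup_mem
  · exact ⟨0, Nat.zero_le _, fun s hs1 hs2 => absurd (hs1.trans hs2) (by simp)⟩
  · exact ⟨m, fun j hj => hj.1⟩

lemma stepDownCount_aux (m : ℕ) (α : ℕ → ℝ) (hα : Monotone α) (q q' : Fin m → ℝ) (i : Fin m)
    (hdiff : ∀ j, j ≠ i → q' j = q j)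
    (hbound : q' i ≤ α (stepDownCount m α q' + 1)) :
    stepDownCount m α q ≤ stepDownCount m α q' := by
  set k' := stepDownCount m α q' with hk'
  obtain ⟨hk'm, hk'prop⟩ := stepDownCount_mem m α q'
  obtain ⟨hkm, hkprop⟩ := stepDownCount_mem m α q
  apply le_csSup ⟨m, fun j hj => hj.1⟩
  refine ⟨hkm, fun s hs1 hs2 => ?_⟩
  by_cases hsk' : s ≤ k'
  · exact hk'prop s hs1 hsk'
  · -- k' < s, so q' i ≤ α (k'+1) ≤ α s
    have hqi : q' i ≤ α s := le_trans hbound (hα (Nat.succ_le_of_lt (Nat.lt_of_not_le hsk')))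
    have hsub : (Finset.univ.filter fun j => q j ≤ α s) ⊆
        (Finset.univ.filter fun j => q' j ≤ α s) := by
      intro j hj
      simp only [Finset.mem_filter, Finset.mem_univ, true_and] at hj ⊢
      by_cases hji : j = i
      · exact hji ▸ hqi
      · exact (hdiff j hji) ▸ hj
    exact le_trans (hkprop s hs1 hs2) (Finset.card_le_card hsub)

/-- A step-down procedure defines a simple selection rule: if `H_{0i}` is rejected, and
`p i` is changed to any other value for which `H_{0i}` is still rejected (the other
p-values fixed), then the total number of rejections is unchanged. -/
theorem stmt4 (m : ℕ) (α : ℕ → ℝ) (hα : Monotone α) (p p' : Fin m → ℝ) (i : Fin m)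
    (hdiff : ∀ j, j ≠ i → p' j = p j)
    (hrej : 1 ≤ stepDownCount m α p ∧ p i ≤ α (stepDownCount m α p))
    (hrej' : 1 ≤ stepDownCount m α p' ∧ p' i ≤ α (stepDownCount m α p')) :
    stepDownCount m α p' = stepDownCount m α p := by
  have h1 : stepDownCount m α p ≤ stepDownCount m α p' :=
    stepDownCount_aux m α hα p p' i hdiff
      (le_trans hrej'.2 (hα (Nat.le_succ _)))
  have h2 : stepDownCount m α p' ≤ stepDownCount m α p :=
    stepDownCount_aux m α hα p' p i (fun j hj => (hdiff j hj).symm)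
      (le_trans hrej.2 (hα (Nat.le_succ _)))
  exact le_antisymm h2 h1
end

section
/- (Theorem 2.1, Simple Selection-Adjusted Procedure.) Let P = (P_1,...,P_m) be independent families of p-values. Let S(P) ⊆ {1,...,m} be a simple selection rule, and let R = |S(P)|. Suppose that for each selected family i an error-controlling procedure is applied at level Rq/m, so that the error variable C_i ≥ 0 (taking values in a countable set) satisfies E(C_i) ≤ kq/m conditionally on any configuration in which k families are selected, and C_i = 0 whenever family i is not selected. Then E( Σ_{i∈S(P)} C_i / max(|S(P)|,1) ) ≤ q. -/
/-!
Integrate out family `i` first, with the other families held fixed. By simplicity, `|S|` takes a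
single value `k` on the part of that slice where `i` is selected, and `C i` vanishes off it, so the
slice contributes `E(C i) / k ≤ q / m`. Summing over the `m` families gives `q`.
-/

open MeasureTheory Finset Function
open scoped ENNReal

section Slices

variable {ι : Type*} [Fintype ι] [DecidableEq ι] {E : ι → Type*} [∀ i, MeasurableSpace (E i)]
  {ν : ∀ i, Measure (E i)} [∀ i, IsProbabilityMeasure (ν i)]

theorem lintegral_pi_eq_lintegral_lintegral_update {f : (∀ j, E j) → ℝ≥0∞} (hf : Measurable f)
    (i : ι) : ∫⁻ x, f x ∂Measure.pi ν = ∫⁻ x, ∫⁻ p, f (update x i p) ∂ν i ∂Measure.pi ν := by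
  rw [← lmarginal_singleton f i]
  refine lintegral_eq_of_lmarginal_eq {i} hf (hf.lmarginal ν) ?_
  ext x
  rw [lmarginal_singleton (∫⋯∫⁻_{i}, f ∂ν)]
  simp_rw [lmarginal_update_of_mem ν (mem_singleton_self i)]
  simp

theorem MeasureTheory.Integrable.ae_integrable_comp_update {f : (∀ j, E j) → ℝ}
    (hf : Integrable f (Measure.pi ν)) (hfm : Measurable f) (i : ι) :
    ∀ᵐ x ∂Measure.pi ν, Integrable (fun p => f (update x i p)) (ν i) := by
  have hslice_meas : Measurable fun x => ∫⁻ p, ‖f (update x i p)‖ₑ ∂ν i := by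
    simpa only [lmarginal_singleton] using hfm.enorm.lmarginal ν (s := {i})
  have hfin : ∫⁻ x, ∫⁻ p, ‖f (update x i p)‖ₑ ∂ν i ∂Measure.pi ν ≠ ⊤ := by
    rw [← lintegral_pi_eq_lintegral_lintegral_update hfm.enorm]
    exact hf.2.ne
  filter_upwards [ae_lt_top hslice_meas hfin] with x hx
  exact ⟨(hfm.comp (measurable_update x)).aestronglyMeasurable, hx⟩

end Slices

theorem lintegral_ofReal_div_le_of_integral_le {α : Type*} [MeasurableSpace α] {μ : Measure α}
    {c : α → ℝ} (hc : Integrable c μ) (hc0 : 0 ≤ᵐ[μ] c) {k b : ℝ} (hk : 0 < k)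
    (hcb : ∫ p, c p ∂μ ≤ k * b) : ∫⁻ p, ENNReal.ofReal (c p / k) ∂μ ≤ ENNReal.ofReal b := by
  rw [← ofReal_integral_eq_lintegral_ofReal (hc.div_const k)
    (hc0.mono fun p hp => div_nonneg hp hk.le), integral_div]
  exact ENNReal.ofReal_le_ofReal ((div_le_iff₀' hk).2 hcb)

section Selection

variable {ι : Type*} {E : ι → Type*}

def IsSimpleSelection (S : (∀ i, E i) → Finset ι) : Prop :=
  ∀ (x : ∀ j, E j) (i : ι), i ∈ S x →
    ∀ y : ∀ j, E j, (∀ j, j ≠ i → y j = x j) → i ∈ S y → (S y).card = (S x).card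

variable {S : (∀ i, E i) → Finset ι}

theorem apply_le_card_mul_sum_div_max_card [Fintype ι] {C : ι → (∀ j, E j) → ℝ}
    (hC0 : ∀ i x, 0 ≤ C i x) (hCzero : ∀ i x, i ∉ S x → C i x = 0) (i : ι) (x : ∀ j, E j) :
    C i x ≤ Fintype.card ι * ((∑ j ∈ S x, C j x) / ((max (S x).card 1 : ℕ) : ℝ)) := by
  have hsum0 : 0 ≤ ∑ j ∈ S x, C j x := sum_nonneg fun j _ => hC0 j x
  by_cases hi : i ∈ S x
  · have hcard : 1 ≤ (S x).card := card_pos.2 ⟨i, hi⟩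
    calc C i x ≤ ∑ j ∈ S x, C j x := single_le_sum (fun j _ => hC0 j x) hi
      _ = (S x).card * ((∑ j ∈ S x, C j x) / (S x).card) := by
        field_simp
      _ ≤ Fintype.card ι * ((∑ j ∈ S x, C j x) / ((max (S x).card 1 : ℕ) : ℝ)) := by
        rw [max_eq_left hcard]
        gcongr
        exact_mod_cast card_le_univ (S x)
  · rw [hCzero i x hi]
    positivity

theorem IsSimpleSelection.card_update_eq [DecidableEq ι] (hS : IsSimpleSelection S)
    {x : ∀ j, E j} {i : ι} {p p' : E i} (hp : i ∈ S (update x i p))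
    (hp' : i ∈ S (update x i p')) : (S (update x i p')).card = (S (update x i p)).card :=
  hS _ i hp _ (fun j hj => by simp only [update_of_ne hj]) hp'

variable [∀ i, MeasurableSpace (E i)]

theorem measurable_natCast_max_card_one (hScard : Measurable fun x => (S x).card) :
    Measurable fun x => ((max (S x).card 1 : ℕ) : ℝ) :=
  (measurable_from_top (f := fun n : ℕ => ((max n 1 : ℕ) : ℝ))).comp hScard

variable [DecidableEq ι]

theorem lintegral_update_div_max_card_le (hS : IsSimpleSelection S) {C : (∀ j, E j) → ℝ}
    {i : ι} {μ : Measure (E i)} {x : ∀ j, E j} {b : ℝ}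
    (hC0 : ∀ y, 0 ≤ C y) (hCzero : ∀ y, i ∉ S y → C y = 0)
    (hint : Integrable (fun p => C (update x i p)) μ)
    (hcontrol : ∀ k : ℕ, (∀ p, i ∈ S (update x i p) → (S (update x i p)).card = k) →
      ∫ p, C (update x i p) ∂μ ≤ k * b) :
    ∫⁻ p, ENNReal.ofReal
      (C (update x i p) / ((max (S (update x i p)).card 1 : ℕ) : ℝ)) ∂μ ≤ ENNReal.ofReal b := by
  by_cases hsel : ∃ p₁, i ∈ S (update x i p₁)
  · obtain ⟨p₁, hp₁⟩ := hsel
    set k := (S (update x i p₁)).card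
    have hk : 1 ≤ k := card_pos.2 ⟨i, hp₁⟩
    have hcard : ∀ p, i ∈ S (update x i p) → (S (update x i p)).card = k :=
      fun p hp => hS.card_update_eq hp₁ hp
    have hdiv : ∀ p, C (update x i p) / ((max (S (update x i p)).card 1 : ℕ) : ℝ) =
        C (update x i p) / k := by
      intro p
      by_cases hp : i ∈ S (update x i p)
      · rw [hcard p hp, max_eq_left hk]
      · rw [hCzero _ hp, zero_div, zero_div]
    simp_rw [hdiv]
    exact lintegral_ofReal_div_le_of_integral_le hint (ae_of_all _ fun p => hC0 _)
      (by exact_mod_cast hk) (hcontrol k hcard)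
  · simp only [not_exists] at hsel
    simp [hCzero _ (hsel _)]

theorem lintegral_ofReal_div_max_card_le [Fintype ι] {ν : ∀ i, Measure (E i)}
    [∀ i, IsProbabilityMeasure (ν i)] (hS : IsSimpleSelection S)
    (hScard : Measurable fun x => (S x).card) {C : (∀ j, E j) → ℝ} {i : ι} {b : ℝ}
    (hCmeas : Measurable C) (hC0 : ∀ y, 0 ≤ C y) (hCzero : ∀ y, i ∉ S y → C y = 0)
    (hCint : Integrable C (Measure.pi ν))
    (hcontrol : ∀ (x : ∀ j, E j) (k : ℕ),
      (∀ p, i ∈ S (update x i p) → (S (update x i p)).card = k) →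
      ∫ p, C (update x i p) ∂ν i ≤ k * b) :
    ∫⁻ x, ENNReal.ofReal (C x / ((max (S x).card 1 : ℕ) : ℝ)) ∂Measure.pi ν
      ≤ ENNReal.ofReal b := by
  have hmeas : Measurable fun x => ENNReal.ofReal (C x / ((max (S x).card 1 : ℕ) : ℝ)) :=
    ENNReal.measurable_ofReal.comp (hCmeas.div (measurable_natCast_max_card_one hScard))
  calc _ = ∫⁻ x, ∫⁻ p, ENNReal.ofReal
          (C (update x i p) / ((max (S (update x i p)).card 1 : ℕ) : ℝ)) ∂ν i ∂Measure.pi ν :=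
        lintegral_pi_eq_lintegral_lintegral_update hmeas i
    _ ≤ ∫⁻ _, ENNReal.ofReal b ∂Measure.pi ν := by
        refine lintegral_mono_ae ?_
        filter_upwards [hCint.ae_integrable_comp_update hCmeas i] with x hx
        exact lintegral_update_div_max_card_le hS hC0 hCzero hx (hcontrol x)
    _ = ENNReal.ofReal b := by simp

theorem integral_sum_div_max_card_le [Fintype ι] {ν : ∀ i, Measure (E i)}
    [∀ i, IsProbabilityMeasure (ν i)] (hS : IsSimpleSelection S)
    (hScard : Measurable fun x => (S x).card) {C : ι → (∀ j, E j) → ℝ} {b : ℝ} (hb : 0 ≤ b)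
    (hCmeas : ∀ i, Measurable (C i)) (hC0 : ∀ i x, 0 ≤ C i x)
    (hCzero : ∀ i x, i ∉ S x → C i x = 0)
    (hcontrol : ∀ (i : ι) (x : ∀ j, E j) (k : ℕ),
      (∀ p, i ∈ S (update x i p) → (S (update x i p)).card = k) →
      ∫ p, C i (update x i p) ∂ν i ≤ k * b) :
    ∫ x, (∑ i ∈ S x, C i x) / ((max (S x).card 1 : ℕ) : ℝ) ∂Measure.pi ν
      ≤ Fintype.card ι * b := by
  set D : (∀ j, E j) → ℝ := fun x => ((max (S x).card 1 : ℕ) : ℝ)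
  have hD0 : ∀ x, 0 ≤ D x := fun x => Nat.cast_nonneg _
  have hsplit : ∀ x, (∑ i ∈ S x, C i x) / D x = ∑ i, C i x / D x := fun x => by
    rw [sum_subset (subset_univ _) fun i _ hi => hCzero i x hi, sum_div]
  by_cases hint : Integrable (fun x => (∑ i ∈ S x, C i x) / D x) (Measure.pi ν)
  swap
  · rw [integral_undef hint]
    positivity
  have hCint : ∀ i, Integrable (C i) (Measure.pi ν) := fun i =>
    (hint.const_mul _).mono' (hCmeas i).aestronglyMeasurable (ae_of_all _ fun x => by
      rw [Real.norm_of_nonneg (hC0 i x)]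
      exact apply_le_card_mul_sum_div_max_card hC0 hCzero i x)
  have hterm_meas : ∀ i, Measurable fun x => ENNReal.ofReal (C i x / D x) := fun i =>
    ENNReal.measurable_ofReal.comp ((hCmeas i).div (measurable_natCast_max_card_one hScard))
  rw [integral_eq_lintegral_of_nonneg_ae
    (ae_of_all _ fun x => div_nonneg (sum_nonneg fun i _ => hC0 i x) (hD0 x))
    hint.aestronglyMeasurable]
  refine ENNReal.toReal_le_of_le_ofReal (by positivity) ?_
  calc ∫⁻ x, ENNReal.ofReal ((∑ i ∈ S x, C i x) / D x) ∂Measure.pi ν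
      = ∑ i, ∫⁻ x, ENNReal.ofReal (C i x / D x) ∂Measure.pi ν := by
        simp_rw [hsplit, ENNReal.ofReal_sum_of_nonneg fun i _ => div_nonneg (hC0 i _) (hD0 _)]
        exact lintegral_finsetSum _ fun i _ => hterm_meas i
    _ ≤ ∑ _i : ι, ENNReal.ofReal b := sum_le_sum fun i _ =>
        lintegral_ofReal_div_max_card_le hS hScard (hCmeas i) (hC0 i) (hCzero i) (hCint i)
          (hcontrol i)
    _ = ENNReal.ofReal (Fintype.card ι * b) := by
        rw [sum_const, card_univ, nsmul_eq_mul, ENNReal.ofReal_mul (Nat.cast_nonneg _),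
          ENNReal.ofReal_natCast]

end Selection

theorem stmt8_general {m : ℕ} {E : Fin m → Type*} [∀ i, MeasurableSpace (E i)]
    (ν : ∀ i, Measure (E i)) [∀ i, IsProbabilityMeasure (ν i)]
    (q : ℝ) (hq : 0 < q)
    (S : (∀ i, E i) → Finset (Fin m))
    (hScard : Measurable fun x => (S x).card)
    (hsimple : ∀ (x : ∀ j, E j) (i : Fin m), i ∈ S x →
      ∀ y : ∀ j, E j, (∀ j, j ≠ i → y j = x j) → i ∈ S y → (S y).card = (S x).card)
    (C : Fin m → (∀ j, E j) → ℝ)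
    (hCmeas : ∀ i, Measurable (C i))
    (hCnonneg : ∀ i x, 0 ≤ C i x)
    (hCzero : ∀ i x, i ∉ S x → C i x = 0)
    (hcontrol : ∀ (i : Fin m) (x : ∀ j, E j) (k : ℕ),
      (∀ p : E i, i ∈ S (Function.update x i p) → (S (Function.update x i p)).card = k) →
      (∫ p, C i (Function.update x i p) ∂ ν i) ≤ k * q / m) :
    (∫ x, (∑ i ∈ S x, C i x) / ((max (S x).card 1 : ℕ) : ℝ) ∂ Measure.pi ν) ≤ q := by
  have hbound := integral_sum_div_max_card_le hsimple hScard (div_nonneg hq.le m.cast_nonneg)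
    hCmeas hCnonneg hCzero fun i x k hk => (mul_div_assoc (k : ℝ) q m) ▸ hcontrol i x k hk
  rw [Fintype.card_fin] at hbound
  refine hbound.trans ?_
  rcases eq_or_ne m 0 with rfl | hm
  · simpa using hq.le
  · rw [mul_div_cancel₀ q (Nat.cast_ne_zero.2 hm)]

/-- Theorem 2.1 (Simple Selection-Adjusted Procedure).  The p-value configurations of
the `m` families are independent (product measure over the family spaces `E i`).
`S` is a simple selection rule: for a selected family `i`, changing only the family-`i`
p-values in a way that keeps `i` selected does not change the number of selected
families.  The error variable `C i` is nonnegative, takes values in a countable set,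
vanishes when family `i` is not selected, and the `E(𝒞)`-controlling procedure applied
at level `kq/m` within each selected family guarantees, conditionally on any
configuration of the other families under which selection of `i` entails exactly `k`
selected families, that `E(C i) ≤ kq/m`.  Then the expected average error over the
selected families is at most `q`. -/
theorem stmt8 {m : ℕ} (hm : 1 ≤ m) {E : Fin m → Type*} [∀ i, MeasurableSpace (E i)]
    (ν : ∀ i, Measure (E i)) [∀ i, IsProbabilityMeasure (ν i)]
    (q : ℝ) (hq : 0 < q)
    (S : (∀ i, E i) → Finset (Fin m))
    (hSmeas : ∀ i, MeasurableSet {x | i ∈ S x})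
    (hScard : Measurable fun x => (S x).card)
    (hsimple : ∀ (x : ∀ j, E j) (i : Fin m), i ∈ S x →
      ∀ y : ∀ j, E j, (∀ j, j ≠ i → y j = x j) → i ∈ S y → (S y).card = (S x).card)
    (C : Fin m → (∀ j, E j) → ℝ)
    (hCmeas : ∀ i, Measurable (C i))
    (hCnonneg : ∀ i x, 0 ≤ C i x)
    (hCcount : ∀ i, (Set.range (C i)).Countable)
    (hCzero : ∀ i x, i ∉ S x → C i x = 0)
    (hcontrol : ∀ (i : Fin m) (x : ∀ j, E j) (k : ℕ),
      (∀ p : E i, i ∈ S (Function.update x i p) → (S (Function.update x i p)).card = k) →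
      (∫ p, C i (Function.update x i p) ∂ ν i) ≤ k * q / m) :
    (∫ x, (∑ i ∈ S x, C i x) / ((max (S x).card 1 : ℕ) : ℝ) ∂ Measure.pi ν) ≤ q :=
  stmt8_general ν q hq S hScard hsimple C hCmeas hCnonneg hCzero hcontrol
end

section
/- (Theorem 2.2, general Selection-Adjusted Procedure.) Let the families of p-values be independent across families, let S be an arbitrary selection rule, and for each selected family i define R_min(P^{(i)}) = min over p-value configurations p of family i such that i ∈ S(P^{(i)}, p) of |S(P^{(i)}, p)|. If each selected family i is tested by an E(C)-controlling procedure at level R_min(P^{(i)})·q/m (so E(C_i) ≤ α whenever the level α is used, and C_i = 0 for unselected families), then E( Σ_{i∈S(P)} C_i / max(|S(P)|,1) ) ≤ q. -/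
/-!
Split the average error as `∑ᵢ Cᵢ / |S|`. On `{i ∈ S}` one has `R_min(P^{(i)}) ≤ |S|`, so the
`i`-th term is at most `Cᵢ / R_min(P^{(i)})`. Since `R_min(P^{(i)})` depends only on the p-values
outside family `i`, integrating first over family `i` (independence) gives at most
`R_min(P^{(i)}) (q / m) / R_min(P^{(i)}) ≤ q / m`, and summing over the `m` families gives `q`.
-/

open MeasureTheory
open scoped ENNReal

namespace MeasureTheory

variable {ι : Type*} [DecidableEq ι] {E : ι → Type*} [∀ i, MeasurableSpace (E i)]
  {ν : ∀ i, Measure (E i)}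

theorem _root_.Measurable.lintegral_update [∀ i, SigmaFinite (ν i)] {f : (∀ j, E j) → ℝ≥0∞}
    (hf : Measurable f) (i : ι) : Measurable fun x => ∫⁻ p, f (Function.update x i p) ∂ν i := by
  simpa only [lmarginal_singleton] using hf.lmarginal (s := {i}) ν

variable [Fintype ι] [∀ i, IsProbabilityMeasure (ν i)]

theorem lintegral_lintegral_update_pi {f : (∀ j, E j) → ℝ≥0∞} (hf : Measurable f) (i : ι) :
    ∫⁻ x, ∫⁻ p, f (Function.update x i p) ∂ν i ∂Measure.pi ν = ∫⁻ x, f x ∂Measure.pi ν := by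
  obtain ⟨x⟩ := Measure.nonempty_of_neZero (Measure.pi ν)
  rw [lintegral_eq_lmarginal_univ x, lintegral_eq_lmarginal_univ x,
    lmarginal_erase' _ (hf.lintegral_update i) (Finset.mem_univ i),
    lmarginal_erase' f hf (Finset.mem_univ i)]
  simp

theorem Integrable.ae_integrable_update {f : (∀ j, E j) → ℝ} (hf : Measurable f)
    (hfi : Integrable f (Measure.pi ν)) (i : ι) :
    ∀ᵐ x ∂Measure.pi ν, Integrable (fun p => f (Function.update x i p)) (ν i) := by
  have hfin : ∫⁻ x, ∫⁻ p, ‖f (Function.update x i p)‖ₑ ∂ν i ∂Measure.pi ν ≠ ∞ := by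
    rw [lintegral_lintegral_update_pi hf.enorm]
    exact hfi.hasFiniteIntegral.ne
  filter_upwards [ae_lt_top (hf.enorm.lintegral_update i) hfin] with x hx
  exact ⟨(hf.comp (measurable_update x)).aestronglyMeasurable, hx⟩

end MeasureTheory

section Selection

variable {ι : Type*}

theorem ofReal_sum_div_max_card [Fintype ι] {s : Finset ι} {c : ι → ℝ} (hc : ∀ i, 0 ≤ c i)
    (hs : ∀ i ∉ s, c i = 0) :
    ENNReal.ofReal ((∑ i ∈ s, c i) / (max s.card 1 : ℕ)) =
      ∑ i, ENNReal.ofReal (c i) / s.card := by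
  rcases s.eq_empty_or_nonempty with rfl | hne
  · simp [hs]
  rw [max_eq_left hne.card_pos, ENNReal.ofReal_div_of_pos (by exact_mod_cast hne.card_pos),
    ENNReal.ofReal_sum_of_nonneg fun i _ => hc i, ENNReal.ofReal_natCast]
  simp_rw [div_eq_mul_inv, ← Finset.sum_mul]
  congr 1
  exact Finset.sum_subset (Finset.subset_univ s) fun i _ hi => by simp [hs i hi]

theorem le_card_mul_sum_div_max_card [Fintype ι] {s : Finset ι} {c : ι → ℝ}
    (hc : ∀ i, 0 ≤ c i) (hs : ∀ i ∉ s, c i = 0) (i : ι) :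
    c i ≤ Fintype.card ι * ((∑ j ∈ s, c j) / (max s.card 1 : ℕ)) := by
  by_cases hi : i ∈ s
  · have hpos : (0 : ℝ) < s.card := by exact_mod_cast Finset.card_pos.mpr ⟨i, hi⟩
    rw [max_eq_left (by exact_mod_cast hpos : 1 ≤ s.card)]
    calc c i ≤ ∑ j ∈ s, c j := Finset.single_le_sum (fun j _ => hc j) hi
      _ = s.card * ((∑ j ∈ s, c j) / s.card) := by field_simp
      _ ≤ Fintype.card ι * ((∑ j ∈ s, c j) / s.card) := by
        gcongr
        · exact div_nonneg (Finset.sum_nonneg fun j _ => hc j) hpos.le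
        · exact_mod_cast s.card_le_univ
  · rw [hs i hi]
    have := Finset.sum_nonneg fun j (_ : j ∈ s) => hc j
    positivity

variable [DecidableEq ι] {E : ι → Type*}

/-- `R_min(P^{(i)})` at the configuration `x`; it depends on `x` only through the coordinates
other than `i`. -/
noncomputable def minSelectedCard (S : (∀ j, E j) → Finset ι) (i : ι) (x : ∀ j, E j) : ℕ :=
  sInf {r | ∃ p : E i, i ∈ S (Function.update x i p) ∧ (S (Function.update x i p)).card = r}

theorem minSelectedCard_le_card {S : (∀ j, E j) → Finset ι} {i : ι} {x : ∀ j, E j} {p : E i}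
    (h : i ∈ S (Function.update x i p)) :
    minSelectedCard S i x ≤ (S (Function.update x i p)).card :=
  Nat.sInf_le ⟨p, h, rfl⟩

theorem lintegral_ofReal_update_div_card_le {S : (∀ j, E j) → Finset ι} {C : (∀ j, E j) → ℝ}
    {i : ι} [MeasurableSpace (E i)] {μ : Measure (E i)} {x : ∀ j, E j} {a : ℝ}
    (hC : ∀ y, 0 ≤ C y) (hCS : ∀ y, i ∉ S y → C y = 0)
    (hint : Integrable (fun p => C (Function.update x i p)) μ)
    (hcontrol : ∫ p, C (Function.update x i p) ∂μ ≤ minSelectedCard S i x * a) :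
    ∫⁻ p, ENNReal.ofReal (C (Function.update x i p)) / (S (Function.update x i p)).card ∂μ ≤
      ENNReal.ofReal a := by
  set R := minSelectedCard S i x
  have hpt : ∀ p, ENNReal.ofReal (C (Function.update x i p)) / (S (Function.update x i p)).card ≤
      ENNReal.ofReal (C (Function.update x i p)) / R := fun p => by
    by_cases hi : i ∈ S (Function.update x i p)
    · exact ENNReal.div_le_div_left (by exact_mod_cast minSelectedCard_le_card hi) _
    · simp [hCS _ hi]
  calc _ ≤ ∫⁻ p, ENNReal.ofReal (C (Function.update x i p)) / R ∂μ := lintegral_mono hpt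
    _ = ENNReal.ofReal (∫ p, C (Function.update x i p) ∂μ) / R := by
      simp_rw [div_eq_mul_inv]
      rw [lintegral_mul_const'' _ hint.aemeasurable.ennreal_ofReal,
        ofReal_integral_eq_lintegral_ofReal hint (.of_forall fun p => hC _)]
    _ ≤ ENNReal.ofReal (R * a) / R := by gcongr
    _ ≤ ENNReal.ofReal a := by
      rw [ENNReal.ofReal_mul (Nat.cast_nonneg R), ENNReal.ofReal_natCast, mul_comm, mul_div_assoc]
      exact mul_le_of_le_one_right' ENNReal.div_self_le_one

variable [Fintype ι] [∀ i, MeasurableSpace (E i)] {ν : ∀ i, Measure (E i)}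
  [∀ i, IsProbabilityMeasure (ν i)]

theorem lintegral_ofReal_div_card_le {S : (∀ j, E j) → Finset ι} {C : (∀ j, E j) → ℝ}
    {i : ι} {a : ℝ} (hS : Measurable fun x => (S x).card) (hCm : Measurable C)
    (hCi : Integrable C (Measure.pi ν)) (hC : ∀ y, 0 ≤ C y) (hCS : ∀ y, i ∉ S y → C y = 0)
    (hcontrol : ∀ x, ∫ p, C (Function.update x i p) ∂ν i ≤ minSelectedCard S i x * a) :
    ∫⁻ x, ENNReal.ofReal (C x) / (S x).card ∂Measure.pi ν ≤ ENNReal.ofReal a := by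
  have hmeas : Measurable fun x => ENNReal.ofReal (C x) / (S x).card :=
    hCm.ennreal_ofReal.div (measurable_from_top.comp hS)
  rw [← lintegral_lintegral_update_pi hmeas i]
  calc _ ≤ ∫⁻ _, ENNReal.ofReal a ∂Measure.pi ν :=
        lintegral_mono_ae <| (hCi.ae_integrable_update hCm i).mono fun x hx =>
          lintegral_ofReal_update_div_card_le hC hCS hx (hcontrol x)
    _ = ENNReal.ofReal a := by simp

end Selection

theorem stmt9_general {m : ℕ} (hm : 1 ≤ m) {E : Fin m → Type*} [∀ i, MeasurableSpace (E i)]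
    (ν : ∀ i, Measure (E i)) [∀ i, IsProbabilityMeasure (ν i)]
    (q : ℝ) (hq : 0 < q)
    (S : (∀ i, E i) → Finset (Fin m))
    (hScard : Measurable fun x => (S x).card)
    (C : Fin m → (∀ j, E j) → ℝ)
    (hCmeas : ∀ i, Measurable (C i))
    (hCnonneg : ∀ i x, 0 ≤ C i x)
    (hCzero : ∀ i x, i ∉ S x → C i x = 0)
    (hcontrol : ∀ (i : Fin m) (x : ∀ j, E j),
      (∫ p, C i (Function.update x i p) ∂ ν i) ≤
        (sInf {r : ℕ | ∃ p : E i, i ∈ S (Function.update x i p) ∧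
          (S (Function.update x i p)).card = r} : ℕ) * q / m) :
    (∫ x, (∑ i ∈ S x, C i x) / ((max (S x).card 1 : ℕ) : ℝ) ∂ Measure.pi ν) ≤ q := by
  set f : (∀ j, E j) → ℝ := fun x => (∑ i ∈ S x, C i x) / ((max (S x).card 1 : ℕ) : ℝ)
  by_cases hfi : Integrable f (Measure.pi ν)
  swap
  · rw [integral_undef hfi]
    exact hq.le
  have hCi : ∀ i, Integrable (C i) (Measure.pi ν) := fun i =>
    (hfi.const_mul m).mono' (hCmeas i).aestronglyMeasurable <| .of_forall fun x => by
      rw [Real.norm_of_nonneg (hCnonneg i x), ← Fintype.card_fin m]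
      exact le_card_mul_sum_div_max_card (hCnonneg · x) (hCzero · x) i
  have hf0 : ∀ x, 0 ≤ f x := fun x =>
    div_nonneg (Finset.sum_nonneg fun i _ => hCnonneg i x) (Nat.cast_nonneg _)
  rw [integral_eq_lintegral_of_nonneg_ae (.of_forall hf0) hfi.aestronglyMeasurable]
  refine ENNReal.toReal_le_of_le_ofReal hq.le ?_
  calc ∫⁻ x, ENNReal.ofReal (f x) ∂Measure.pi ν
        = ∑ i, ∫⁻ x, ENNReal.ofReal (C i x) / (S x).card ∂Measure.pi ν := by
        simp_rw [f, ofReal_sum_div_max_card (hCnonneg · _) (hCzero · _)]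
        exact lintegral_finsetSum _ fun i _ =>
          (hCmeas i).ennreal_ofReal.div (measurable_from_top.comp hScard)
    _ ≤ ∑ _i : Fin m, ENNReal.ofReal (q / m) := Finset.sum_le_sum fun i _ =>
        lintegral_ofReal_div_card_le hScard (hCmeas i) (hCi i) (hCnonneg i) (hCzero i)
          fun x => by rw [← mul_div_assoc]; exact hcontrol i x
    _ = ENNReal.ofReal q := by
        rw [Finset.sum_const, Finset.card_univ, Fintype.card_fin, nsmul_eq_mul,
          ← ENNReal.ofReal_natCast, ← ENNReal.ofReal_mul (Nat.cast_nonneg m),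
          mul_div_cancel₀ q (by exact_mod_cast (Nat.one_le_iff_ne_zero.mp hm))]

/-- Theorem 2.2 (general Selection-Adjusted Procedure).  Families of p-values are
independent across families; `S` is an arbitrary selection rule.  For each family `i`
and configuration `x`, `R_min(P^{(i)})` is the minimal number of selected families over
family-`i` p-value vectors keeping `i` selected (a function of the p-values outside
family `i` only).  If each selected family `i` is tested by an `E(𝒞)`-controlling
procedure at level `R_min(P^{(i)}) q / m` — so that conditionally on the p-values of
the other families `E(C i) ≤ R_min(P^{(i)}) q / m` — and `C i = 0` for unselected
families, then the expected average error over the selected families is at most `q`. -/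
theorem stmt9 {m : ℕ} (hm : 1 ≤ m) {E : Fin m → Type*} [∀ i, MeasurableSpace (E i)]
    (ν : ∀ i, Measure (E i)) [∀ i, IsProbabilityMeasure (ν i)]
    (q : ℝ) (hq : 0 < q)
    (S : (∀ i, E i) → Finset (Fin m))
    (hSmeas : ∀ i, MeasurableSet {x | i ∈ S x})
    (hScard : Measurable fun x => (S x).card)
    (C : Fin m → (∀ j, E j) → ℝ)
    (hCmeas : ∀ i, Measurable (C i))
    (hCnonneg : ∀ i x, 0 ≤ C i x)
    (hCzero : ∀ i x, i ∉ S x → C i x = 0)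
    (hcontrol : ∀ (i : Fin m) (x : ∀ j, E j),
      (∫ p, C i (Function.update x i p) ∂ ν i) ≤
        (sInf {r : ℕ | ∃ p : E i, i ∈ S (Function.update x i p) ∧
          (S (Function.update x i p)).card = r} : ℕ) * q / m) :
    (∫ x, (∑ i ∈ S x, C i x) / ((max (S x).card 1 : ℕ) : ℝ) ∂ Measure.pi ν) ≤ q :=
  stmt9_general hm ν q hq S hScard C hCmeas hCnonneg hCzero hcontrol
end

section
/- (Telescoping PRDS inequality.) Let q ∈ (0,1), m, m_i ≥ 1, and suppose events D_k (k = 1,...,m) with D_k ⊆ D_{k+1}, C_{k+1} = D_{k+1} \ D_k, C_1 = D_1, satisfy the monotone conditioning property Pr(D_k | P ≤ α) ≤ Pr(D_k | P ≤ α') for all α ≤ α' and each k, where P is a random variable with Pr(P ≤ α) > 0 for α > 0. Then Σ_{k=1}^m Pr( C_k | P ≤ kq/(m·m_i) ) ≤ Pr( D_m | P ≤ q/m_i ) ≤ 1. -/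
/-!
Write `αₖ = k q / (m mᵢ)`. Since `D (k+1)` is the disjoint union of `D k` and `C (k+1)`,
monotonicity of `α ↦ Pr(D k | P ≤ α)` gives
`Pr(D k | P ≤ αₖ) + Pr(C (k+1) | P ≤ αₖ₊₁) ≤ Pr(D (k+1) | P ≤ αₖ₊₁)`,
and chaining these for `k = 1, …, m - 1` telescopes to the bound by `Pr(D m | P ≤ αₘ)`,
where `αₘ = q / mᵢ`.
-/

open MeasureTheory ProbabilityTheory

theorem sum_measure_sdiff_le_of_monotone {Ω : Type*} [MeasurableSpace Ω]
    (ν : ℕ → Measure Ω) (D C : ℕ → Set Ω) (hD : ∀ k, MeasurableSet (D k))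
    (hnested : ∀ k, D k ⊆ D (k + 1))
    (hC1 : C 1 = D 1) (hCk : ∀ k, 1 ≤ k → C (k + 1) = D (k + 1) \ D k)
    (hmono : ∀ k, 1 ≤ k → ν k (D k) ≤ ν (k + 1) (D k)) (n : ℕ) (hn : 1 ≤ n) :
    ∑ k ∈ Finset.Icc 1 n, ν k (C k) ≤ ν n (D n) := by
  induction n, hn using Nat.le_induction with
  | base => simp [hC1]
  | succ n hn ih =>
    calc ∑ k ∈ Finset.Icc 1 (n + 1), ν k (C k)
        = ∑ k ∈ Finset.Icc 1 n, ν k (C k) + ν (n + 1) (C (n + 1)) :=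
          Finset.sum_Icc_succ_top (by omega) _
      _ ≤ ν n (D n) + ν (n + 1) (C (n + 1)) := by gcongr
      _ ≤ ν (n + 1) (D n) + ν (n + 1) (C (n + 1)) := by gcongr ?_ + _; exact hmono n hn
      _ = ν (n + 1) (D (n + 1)) := by
          rw [hCk n hn, measure_add_sdiff (hD n).nullMeasurableSet,
            Set.union_eq_right.mpr (hnested n)]

theorem stmt14_general {Ω : Type*} [MeasurableSpace Ω] (μ : Measure Ω)
    (q : ℝ) (hq0 : 0 < q) (m mi : ℕ) (hm : 1 ≤ m) (hmi : 1 ≤ mi)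
    (P : Ω → ℝ)
    (D C : ℕ → Set Ω) (hDmeas : ∀ k, MeasurableSet (D k))
    (hnested : ∀ k, D k ⊆ D (k + 1))
    (hC1 : C 1 = D 1) (hCk : ∀ k, 1 ≤ k → C (k + 1) = D (k + 1) \ D k)
    (hcond : ∀ k, ∀ α α' : ℝ, 0 < α → α ≤ α' →
      μ[|{ω | P ω ≤ α}] (D k) ≤ μ[|{ω | P ω ≤ α'}] (D k)) :
    (∑ k ∈ Finset.Icc 1 m, μ[|{ω | P ω ≤ k * q / (m * mi)}] (C k))
      ≤ μ[|{ω | P ω ≤ q / mi}] (D m) ∧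
    μ[|{ω | P ω ≤ q / mi}] (D m) ≤ 1 := by
  have hm' : (0 : ℝ) < m := by exact_mod_cast hm
  have hmi' : (0 : ℝ) < mi := by exact_mod_cast hmi
  have hlevel_m : (m : ℝ) * q / (m * mi) = q / mi := by field_simp
  -- `μ[|s]` is zero or a probability measure, whether or not `μ s = 0`.
  refine ⟨?_, prob_le_one⟩
  rw [← hlevel_m]
  refine sum_measure_sdiff_le_of_monotone _ D C hDmeas hnested hC1 hCk
    (fun k hk ↦ hcond k _ _ ?_ ?_) m hm
  · have hk' : (0 : ℝ) < k := by exact_mod_cast hk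
    positivity
  · push_cast
    gcongr
    linarith

/-- The telescoping PRDS inequality (Appendix D, case (1)): for nested events
`D 1 ⊆ D 2 ⊆ …` with differences `C (k+1) = D (k+1) \ D k`, `C 1 = D 1`, if the
conditional probability `Pr(D k | P ≤ α)` is nondecreasing in `α`, then
`Σ_{k=1}^m Pr(C k | P ≤ kq/(m mᵢ)) ≤ Pr(D m | P ≤ q/mᵢ) ≤ 1`. -/
theorem stmt14 {Ω : Type*} [MeasurableSpace Ω] (μ : Measure Ω) [IsProbabilityMeasure μ]
    (q : ℝ) (hq0 : 0 < q) (hq1 : q < 1) (m mi : ℕ) (hm : 1 ≤ m) (hmi : 1 ≤ mi)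
    (P : Ω → ℝ) (hPmeas : Measurable P)
    (hpos : ∀ α : ℝ, 0 < α → μ {ω | P ω ≤ α} ≠ 0)
    (D C : ℕ → Set Ω) (hDmeas : ∀ k, MeasurableSet (D k)) (hCmeas : ∀ k, MeasurableSet (C k))
    (hnested : ∀ k, D k ⊆ D (k + 1))
    (hC1 : C 1 = D 1) (hCk : ∀ k, 1 ≤ k → C (k + 1) = D (k + 1) \ D k)
    (hcond : ∀ k, ∀ α α' : ℝ, 0 < α → α ≤ α' →
      μ[|{ω | P ω ≤ α}] (D k) ≤ μ[|{ω | P ω ≤ α'}] (D k)) :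
    (∑ k ∈ Finset.Icc 1 m, μ[|{ω | P ω ≤ k * q / (m * mi)}] (C k))
      ≤ μ[|{ω | P ω ≤ q / mi}] (D m) ∧
    μ[|{ω | P ω ≤ q / mi}] (D m) ≤ 1 :=
  stmt14_general μ q hq0 m mi hm hmi P D C hDmeas hnested hC1 hCk hcond
end

section
/- (Theorem 5.1, case (1).) Suppose the vector of all p-values is PRDS on the subset of true-null p-values, the selection rule is concordant, each null p-value is stochastically larger than or equal to Uniform(0,1), and each selected family i (with m_i hypotheses, m_{0i} true nulls) is tested by Bonferroni at level R_min(P^{(i)})q/m, i.e., H_{0ij} is rejected iff P_{ij} ≤ R_min(P^{(i)})q/(m·m_i). Then E( Σ_{i∈S(P)} V_i / max(|S(P)|, 1) ) ≤ q, where V_i is the number of true null hypotheses rejected in family i. -/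
open MeasureTheory ProbabilityTheory
open scoped Classical

/-!
Fix a true null `P_ij`, write `R = R_min(P^{(i)})` and `c = q / (m mᵢ)`. Whenever family `i`
is selected, `1 ≤ R ≤ |S|`, so the contribution of `H_ij` to the expectation is at most
`E[1{P_ij ≤ R c} / R] = ∑ₖ Pr(R = k, P_ij ≤ k c) / k`. Since
`Pr(R = k, P ≤ k c) = Pr(P ≤ k c) (Pr(R ≤ k | P ≤ k c) - Pr(R ≤ k - 1 | P ≤ k c))` and
`Pr(P ≤ k c) ≤ k c`, the `k`-th term is at most `c` times that difference. Concordance makes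
`{R ≤ n}` an increasing set, so PRDS gives `Pr(R ≤ k | P ≤ k c) ≤ Pr(R ≤ k | P ≤ (k + 1) c)`
and the sum telescopes to at most `c`. Summing `c` over the at most `mᵢ` nulls of each of the
`m` families gives `q`.
-/

theorem sum_Icc_le_of_le_sub_of_le_succ {a b t : ℕ → ℝ}
    (ht : ∀ k, 1 ≤ k → t k ≤ a k - b k) (hab : ∀ k, 1 ≤ k → a k ≤ b (k + 1)) (hb : 0 ≤ b 1)
    {M : ℕ} (hM : 1 ≤ M) : ∑ k ∈ Finset.Icc 1 M, t k ≤ a M := by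
  induction M, hM using Nat.le_induction with
  | base => simpa using (ht 1 le_rfl).trans (by linarith)
  | succ n hn ih =>
    rw [Finset.sum_Icc_succ_top (by omega)]
    linarith [ht (n + 1) (by omega), hab n hn]

theorem sum_card_filter_div_le {ι : Type*} [Fintype ι] {κ : ι → Type*}
    (N : ∀ i, Finset (κ i)) (v : ∀ i, κ i → ℝ) (T : Finset ι) (r : ι → ℕ) (c : ι → ℝ)
    (hr : ∀ i ∈ T, 1 ≤ r i ∧ r i ≤ T.card) :
    (∑ i ∈ T, (((N i).filter fun j => v i j ≤ r i * c i).card : ℝ)) / ((max T.card 1 : ℕ) : ℝ) ≤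
      ∑ i, ∑ j ∈ N i, if v i j ≤ r i * c i then (r i : ℝ)⁻¹ else 0 := by
  rw [Finset.sum_div]
  refine (Finset.sum_le_sum fun i hi => ?_).trans
    (Finset.sum_le_sum_of_subset_of_nonneg (Finset.subset_univ T) fun i _ _ =>
      Finset.sum_nonneg fun j _ => by positivity)
  obtain ⟨hr1, hrT⟩ := hr i hi
  calc (((N i).filter fun j => v i j ≤ r i * c i).card : ℝ) / ((max T.card 1 : ℕ) : ℝ)
      ≤ (((N i).filter fun j => v i j ≤ r i * c i).card : ℝ) / r i := by
        gcongr
        exact_mod_cast hrT.trans (le_max_left _ _)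
    _ = ∑ j ∈ N i, if v i j ≤ r i * c i then (r i : ℝ)⁻¹ else 0 := by
        rw [Finset.card_filter, Nat.cast_sum, Finset.sum_div]
        refine Finset.sum_congr rfl fun j _ => ?_
        split_ifs <;> simp

theorem Finset.sum_const_div_mul_le_div {n : ℕ} (s : Finset (Fin n)) {a b : ℝ} (ha : 0 ≤ a)
    (hb : 0 ≤ b) : ∑ _j ∈ s, a / (b * n) ≤ a / b := by
  rw [Finset.sum_const, nsmul_eq_mul]
  calc (s.card : ℝ) * (a / (b * n)) ≤ n * (a / (b * n)) := by
        gcongr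
        exact_mod_cast (Finset.card_le_univ s).trans_eq (Fintype.card_fin n)
    _ ≤ a / b := by
        rcases n.eq_zero_or_pos with rfl | hn
        · simp; positivity
        · have : (n : ℝ) ≠ 0 := by positivity
          exact le_of_eq (by field_simp)

theorem isUpperSet_setOf_le_of_isLowerSet {α : Type*} [LE α] {R : α → ℕ}
    (h : ∀ k, IsLowerSet {x | k ≤ R x}) (n : ℕ) : IsUpperSet {x | R x ≤ n} := by
  simpa only [Set.compl_ofPred, not_le, Nat.lt_succ_iff] using (h (n + 1)).compl

theorem sInf_card_update_mem_Icc {ι : Type*} [DecidableEq ι] {X : ι → Type*}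
    (S : (∀ i, X i) → Finset ι) {x : ∀ i, X i} {i : ι} (hi : i ∈ S x) :
    sInf {r : ℕ | ∃ p : X i, i ∈ S (Function.update x i p) ∧
      (S (Function.update x i p)).card = r} ∈ Set.Icc 1 (S x).card := by
  have hx : (S x).card ∈ {r : ℕ | ∃ p : X i, i ∈ S (Function.update x i p) ∧
      (S (Function.update x i p)).card = r} := ⟨x i, by simpa using hi, by simp⟩
  obtain ⟨p, hp, hcard⟩ := Nat.sInf_mem ⟨_, hx⟩
  exact ⟨hcard ▸ Finset.card_pos.2 ⟨i, hp⟩, Nat.sInf_le hx⟩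

theorem sInf_card_update_le_card {ι : Type*} [Fintype ι] [DecidableEq ι] {X : ι → Type*}
    (S : (∀ i, X i) → Finset ι) (x : ∀ i, X i) (i : ι) :
    sInf {r : ℕ | ∃ p : X i, i ∈ S (Function.update x i p) ∧
      (S (Function.update x i p)).card = r} ≤ Fintype.card ι := by
  rcases Set.eq_empty_or_nonempty {r : ℕ | ∃ p : X i, i ∈ S (Function.update x i p) ∧
      (S (Function.update x i p)).card = r} with h | h
  · simp [h]
  · obtain ⟨p, -, hcard⟩ := Nat.sInf_mem h
    exact hcard ▸ Finset.card_le_univ _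

theorem Set.indicator_le_mul_inv_eq_sum {Ω : Type*} {p : Ω → ℝ} {R : Ω → ℕ} {c : ℝ} {M : ℕ}
    (hRM : ∀ x, R x ≤ M) :
    {x | p x ≤ R x * c}.indicator (fun x => (R x : ℝ)⁻¹) =
      fun x => ∑ k ∈ Finset.Icc 1 M,
        {x | R x = k ∧ p x ≤ k * c}.indicator (fun _ => (k : ℝ)⁻¹) x := by
  funext x
  rcases Nat.eq_zero_or_pos (R x) with hR0 | hR1
  -- `(0 : ℝ)⁻¹ = 0`, so points with `R x = 0` contribute to neither side.
  · refine (Set.indicator_apply_eq_zero.2 fun _ => by simp [hR0]).trans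
      (Finset.sum_eq_zero fun k hk => Set.indicator_of_notMem ?_ _).symm
    rintro ⟨hk0, -⟩
    simp only [Finset.mem_Icc] at hk
    omega
  · rw [Finset.sum_eq_single_of_mem (R x) (Finset.mem_Icc.2 ⟨hR1, hRM x⟩)]
    · simp [Set.indicator_apply]
    · intro k _ hk
      exact Set.indicator_of_notMem (fun h => hk h.1.symm) _

namespace ProbabilityTheory

variable {Ω : Type*} [MeasurableSpace Ω] {μ : Measure Ω}

theorem measureReal_inter_eq_mul_cond [IsFiniteMeasure μ] {B : Set Ω} (hB : MeasurableSet B)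
    (D : Set Ω) : μ.real (B ∩ D) = μ.real B * (μ[|B]).real D := by
  rw [measureReal_def, measureReal_def, measureReal_def, ← ENNReal.toReal_mul, mul_comm,
    cond_mul_eq_inter hB D μ]

theorem measureReal_inter_sdiff_le_mul [IsFiniteMeasure μ] {B D F : Set Ω} {α : ℝ}
    (hB : MeasurableSet B) (hF : MeasurableSet F) (hFD : F ⊆ D) (hBα : μ.real B ≤ α) :
    μ.real (B ∩ (D \ F)) ≤ α * ((μ[|B]).real D - (μ[|B]).real F) := by
  rw [Set.inter_sdiff_distrib_left,
    measureReal_sdiff (Set.inter_subset_inter_right B hFD) (hB.inter hF),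
    measureReal_inter_eq_mul_cond hB, measureReal_inter_eq_mul_cond hB, ← mul_sub]
  exact mul_le_mul_of_nonneg_right hBα (sub_nonneg.2 (measureReal_mono hFD))

variable {p : Ω → ℝ} {R : Ω → ℕ} {c : ℝ} {M : ℕ}

theorem integrable_indicator_le_mul_inv [IsFiniteMeasure μ] (hp : Measurable p)
    (hR : Measurable R) (hRM : ∀ x, R x ≤ M) :
    Integrable ({x | p x ≤ R x * c}.indicator (fun x => (R x : ℝ)⁻¹)) μ := by
  rw [Set.indicator_le_mul_inv_eq_sum hRM]
  exact integrable_finsetSum _ fun k _ => (integrable_const _).indicator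
    ((hR (measurableSet_singleton k)).inter (hp measurableSet_Iic))

theorem integral_indicator_le_mul_inv_le [IsProbabilityMeasure μ] (hp : Measurable p)
    (hR : Measurable R) (hc : 0 < c) (hM : 1 ≤ M) (hRM : ∀ x, R x ≤ M)
    (hsuper : ∀ α, 0 ≤ α → μ {x | p x ≤ α} ≤ ENNReal.ofReal α)
    (hmono : ∀ n : ℕ, ∀ α α', 0 < α → α ≤ α' →
      μ[|{x | p x ≤ α}] {x | R x ≤ n} ≤ μ[|{x | p x ≤ α'}] {x | R x ≤ n}) :
    ∫ x, {x | p x ≤ R x * c}.indicator (fun x => (R x : ℝ)⁻¹) x ∂μ ≤ c := by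
  have hA (k : ℕ) : MeasurableSet {x | R x = k ∧ p x ≤ k * c} :=
    (hR (measurableSet_singleton k)).inter (hp measurableSet_Iic)
  have hD (n : ℕ) : MeasurableSet {x | R x ≤ n} := hR measurableSet_Iic
  set g : ℕ → ℕ → ℝ := fun k n => c * (μ[|{x | p x ≤ k * c}]).real {x | R x ≤ n}
  rw [Set.indicator_le_mul_inv_eq_sum hRM,
    integral_finsetSum _ fun k _ => (integrable_const _).indicator (hA k)]
  simp only [integral_indicator_const _ (hA _), smul_eq_mul]
  calc ∑ k ∈ Finset.Icc 1 M, μ.real {x | R x = k ∧ p x ≤ k * c} * (k : ℝ)⁻¹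
      ≤ g M M := sum_Icc_le_of_le_sub_of_le_succ (a := fun k => g k k)
        (b := fun k => g k (k - 1)) ?_ ?_ (mul_nonneg hc.le measureReal_nonneg) hM
    _ ≤ c := mul_le_of_le_one_right hc.le measureReal_le_one
  · intro k hk
    have hk0 : (0 : ℝ) < k := by exact_mod_cast hk
    have hset : {x | R x = k ∧ p x ≤ k * c} =
        {x | p x ≤ k * c} ∩ ({x | R x ≤ k} \ {x | R x ≤ k - 1}) := by
      ext x
      simp only [Set.mem_ofPred_eq, Set.mem_inter_iff, Set.mem_sdiff]
      exact ⟨fun ⟨hRk, hpk⟩ => ⟨hpk, by omega, by omega⟩, fun ⟨hpk, hRk, hRk'⟩ => ⟨by omega, hpk⟩⟩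
    have hB : μ.real {x | p x ≤ k * c} ≤ k * c :=
      ENNReal.toReal_le_of_le_ofReal (by positivity) (hsuper _ (by positivity))
    rw [hset, mul_inv_le_iff₀ hk0]
    calc μ.real ({x | p x ≤ k * c} ∩ ({x | R x ≤ k} \ {x | R x ≤ k - 1}))
        ≤ k * c * ((μ[|{x | p x ≤ k * c}]).real {x | R x ≤ k}
          - (μ[|{x | p x ≤ k * c}]).real {x | R x ≤ k - 1}) :=
          measureReal_inter_sdiff_le_mul (hp measurableSet_Iic) (hD _)
            (fun x (hx : R x ≤ k - 1) => show R x ≤ k by omega) hB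
      _ = (g k k - g k (k - 1)) * k := by ring
  · intro n hn
    have hn0 : (0 : ℝ) < n := by exact_mod_cast hn
    refine mul_le_mul_of_nonneg_left (ENNReal.toReal_mono (measure_ne_top _ _) ?_) hc.le
    simpa using hmono n _ _ (by positivity) (by gcongr; simp)

end ProbabilityTheory

theorem stmt15_general {m : ℕ} (hm : 1 ≤ m) {mi : Fin m → ℕ} (hmi : ∀ i, 1 ≤ mi i)
    (nulls : ∀ i, Finset (Fin (mi i)))
    (μ : Measure (∀ i, Fin (mi i) → ℝ)) [IsProbabilityMeasure μ]
    (q : ℝ) (hq0 : 0 < q)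
    (S : (∀ i, Fin (mi i) → ℝ) → Finset (Fin m))
    (Rmin : (∀ i, Fin (mi i) → ℝ) → Fin m → ℕ)
    (hRmin : ∀ x i, Rmin x i =
      sInf {r : ℕ | ∃ p : Fin (mi i) → ℝ, i ∈ S (Function.update x i p) ∧
        (S (Function.update x i p)).card = r})
    (hRminMeas : ∀ i, Measurable fun x => Rmin x i)
    (hconcordant : ∀ (i : Fin m) (k : ℕ), IsLowerSet {x | k ≤ Rmin x i})
    (hPRDS : ∀ D : Set (∀ i, Fin (mi i) → ℝ), IsUpperSet D → MeasurableSet D →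
      ∀ (i : Fin m), ∀ j ∈ nulls i, ∀ α α' : ℝ, 0 < α → α ≤ α' →
        μ[|{x | x i j ≤ α}] D ≤ μ[|{x | x i j ≤ α'}] D)
    (hnull : ∀ (i : Fin m), ∀ j ∈ nulls i, ∀ α : ℝ, 0 ≤ α →
      μ {x | x i j ≤ α} ≤ ENNReal.ofReal α) :
    (∫ x, (∑ i ∈ S x,
        (((nulls i).filter fun j => x i j ≤ Rmin x i * q / (m * mi i)).card : ℝ)) /
      ((max (S x).card 1 : ℕ) : ℝ) ∂ μ) ≤ q := by
  set c : Fin m → ℝ := fun i => q / (m * mi i)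
  set f : ∀ i, Fin (mi i) → (∀ i, Fin (mi i) → ℝ) → ℝ := fun i j =>
    {x | x i j ≤ Rmin x i * c i}.indicator fun x => (Rmin x i : ℝ)⁻¹
  have hRm (i : Fin m) (x) : Rmin x i ≤ m := by
    simpa [hRmin] using sInf_card_update_le_card S x i
  have hf_int (i : Fin m) (j : Fin (mi i)) : Integrable (f i j) μ :=
    integrable_indicator_le_mul_inv (by fun_prop) (hRminMeas i) (hRm i)
  have hf_le (i : Fin m) (j) (hj : j ∈ nulls i) : ∫ x, f i j x ∂μ ≤ c i :=
    integral_indicator_le_mul_inv_le (by fun_prop) (hRminMeas i)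
      (by have := hmi i; positivity) hm (hRm i) (hnull i j hj) fun n =>
        hPRDS _ (isUpperSet_setOf_le_of_isLowerSet (hconcordant i) n)
          (hRminMeas i measurableSet_Iic) i j hj
  simp only [mul_div_assoc]
  calc _ ≤ ∫ x, ∑ i, ∑ j ∈ nulls i, f i j x ∂μ := by
        refine integral_mono_of_nonneg
          (.of_forall fun x =>
            div_nonneg (Finset.sum_nonneg fun _ _ => by positivity) (by positivity))
          (integrable_finsetSum _ fun i _ => integrable_finsetSum _ fun j _ => hf_int i j)
          (.of_forall fun x => ?_)
        refine (sum_card_filter_div_le nulls x (S x) (Rmin x) c fun i hi => ?_).trans_eq ?_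
        · simpa [hRmin] using sInf_card_update_mem_Icc S hi
        · simp only [f, Set.indicator_apply, Set.mem_ofPred_eq]
    _ = ∑ i, ∑ j ∈ nulls i, ∫ x, f i j x ∂μ := by
        rw [integral_finsetSum _ fun i _ => integrable_finsetSum _ fun j _ => hf_int i j]
        exact Finset.sum_congr rfl fun i _ => integral_finsetSum _ fun j _ => hf_int i j
    _ ≤ ∑ i, ∑ j ∈ nulls i, c i := by gcongr with i _ j hj; exact hf_le i j hj
    _ ≤ ∑ _i : Fin m, q / m :=
        Finset.sum_le_sum fun i _ => (nulls i).sum_const_div_mul_le_div hq0.le m.cast_nonneg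
    _ = q := by simp; field_simp

/-- Theorem 5.1, case (1).  The joint p-value vector `x : ∀ i, Fin (mᵢ i) → ℝ`
(family `i` has `mᵢ i` hypotheses, with true nulls `nulls i`) has distribution `μ` that
is PRDS on the null coordinates (in the conditional form used in the proof: for every
increasing set `D` and null coordinate `(i,j)`, `Pr(D | P_{ij} ≤ α)` is nondecreasing
in `α`), and each null p-value is stochastically larger than or equal to Uniform(0,1).
The selection rule `S` is concordant: each `{x : k ≤ R_min(P^{(i)})}` is a decreasing
set, where `R_min(P^{(i)})` is the minimal number of selected families over family-`i`
p-value configurations keeping `i` selected.  Each selected family `i` is tested by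
Bonferroni at level `R_min(P^{(i)}) q / m`, rejecting `H_{0ij}` iff
`P_{ij} ≤ R_min(P^{(i)}) q / (m mᵢ)`; `V i` counts the rejected true nulls of family
`i`.  Then `E( Σ_{i ∈ S} V_i / max(|S|,1) ) ≤ q`. -/
theorem stmt15 {m : ℕ} (hm : 1 ≤ m) {mi : Fin m → ℕ} (hmi : ∀ i, 1 ≤ mi i)
    (nulls : ∀ i, Finset (Fin (mi i)))
    (μ : Measure (∀ i, Fin (mi i) → ℝ)) [IsProbabilityMeasure μ]
    (q : ℝ) (hq0 : 0 < q) (hq1 : q < 1)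
    (S : (∀ i, Fin (mi i) → ℝ) → Finset (Fin m))
    (hSmeas : ∀ i, MeasurableSet {x | i ∈ S x})
    (hScard : Measurable fun x => (S x).card)
    (Rmin : (∀ i, Fin (mi i) → ℝ) → Fin m → ℕ)
    (hRmin : ∀ x i, Rmin x i =
      sInf {r : ℕ | ∃ p : Fin (mi i) → ℝ, i ∈ S (Function.update x i p) ∧
        (S (Function.update x i p)).card = r})
    (hRminMeas : ∀ i, Measurable fun x => Rmin x i)
    (hconcordant : ∀ (i : Fin m) (k : ℕ), IsLowerSet {x | k ≤ Rmin x i})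
    (hPRDS : ∀ D : Set (∀ i, Fin (mi i) → ℝ), IsUpperSet D → MeasurableSet D →
      ∀ (i : Fin m), ∀ j ∈ nulls i, ∀ α α' : ℝ, 0 < α → α ≤ α' →
        μ[|{x | x i j ≤ α}] D ≤ μ[|{x | x i j ≤ α'}] D)
    (hnull : ∀ (i : Fin m), ∀ j ∈ nulls i, ∀ α : ℝ, 0 ≤ α →
      μ {x | x i j ≤ α} ≤ ENNReal.ofReal α) :
    (∫ x, (∑ i ∈ S x,
        (((nulls i).filter fun j => x i j ≤ Rmin x i * q / (m * mi i)).card : ℝ)) /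
      ((max (S x).card 1 : ℕ) : ℝ) ∂ μ) ≤ q :=
  stmt15_general hm hmi nulls μ q hq0 S Rmin hRmin hRminMeas hconcordant hPRDS hnull
end

section
/- (Key induction in Appendix D, case 2.) Let A_s (s = 1,...,M) be increasing events of the form A_s = ∪_{t≤s} E_t where the E_t are pairwise disjoint, and suppose Pr(A_s | P ≤ α) is nondecreasing in α for each s. If E_{t} itself decomposes as a disjoint union Σ over I_t, then Pr(A_s | P ≤ sβ) + Pr(E_{s+1} | P ≤ (s+1)β) ≤ Pr(A_{s+1} | P ≤ (s+1)β) for each s < M, and hence Σ_{t=1}^{M} Pr(E_t | P ≤ tβ) ≤ Pr(A_M | P ≤ Mβ) ≤ 1. -/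
/-!
Conditioning on the larger event `P ≤ (s + 1)β` can only increase the probability of `A s`, and
`A (s + 1)` is the disjoint union of `A s` and `E (s + 1)`, so the conditional probabilities add.
Telescoping these one-step inequalities from `A 0 = ∅` gives the bound on the sum, and a
conditional measure has total mass at most one.
-/

open MeasureTheory ProbabilityTheory Function

theorem Finset.sum_Icc_one_le_of_add_le {α : Type*} [AddCommMonoid α] [PartialOrder α]
    [IsOrderedAddMonoid α] {f g : ℕ → α} (h₀ : 0 ≤ g 0) (hstep : ∀ s, g s + f (s + 1) ≤ g (s + 1))
    (n : ℕ) : ∑ t ∈ Finset.Icc 1 n, f t ≤ g n := by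
  induction n with
  | zero => simpa using h₀
  | succ n ih =>
    rw [Finset.sum_Icc_succ_top (by omega)]
    exact (add_le_add_left ih _).trans (hstep n)

section IccUnion

variable {Ω : Type*} (E : ℕ → Set Ω)

theorem Set.biUnion_Icc_one_succ (s : ℕ) :
    ⋃ t ∈ Finset.Icc 1 (s + 1), E t = (⋃ t ∈ Finset.Icc 1 s, E t) ∪ E (s + 1) := by
  rw [← Finset.insert_Icc_right_eq_Icc_add_one (by omega), Finset.set_biUnion_insert,
    Set.union_comm]

variable {E}

theorem Set.disjoint_biUnion_Icc_one_succ (hdisj : Pairwise (Disjoint on E)) (s : ℕ) :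
    Disjoint (⋃ t ∈ Finset.Icc 1 s, E t) (E (s + 1)) :=
  Set.disjoint_iUnion₂_left.2 fun t ht ↦ hdisj (by simp at ht; omega)

theorem MeasureTheory.measure_biUnion_Icc_one_succ [MeasurableSpace Ω] (ν : Measure Ω)
    (hdisj : Pairwise (Disjoint on E)) {s : ℕ} (hE : MeasurableSet (E (s + 1))) :
    ν (⋃ t ∈ Finset.Icc 1 (s + 1), E t) = ν (⋃ t ∈ Finset.Icc 1 s, E t) + ν (E (s + 1)) := by
  rw [Set.biUnion_Icc_one_succ, measure_union (Set.disjoint_biUnion_Icc_one_succ hdisj s) hE]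

end IccUnion

theorem stmt19_general {Ω : Type*} [MeasurableSpace Ω] (μ : Measure Ω)
    (M : ℕ) (β : ℝ) (hβ : 0 < β)
    (P : Ω → ℝ)
    (E : ℕ → Set Ω) (hEmeas : ∀ t, MeasurableSet (E t))
    (hdisj : ∀ t t', t ≠ t' → Disjoint (E t) (E t'))
    (A : ℕ → Set Ω) (hA : ∀ s, A s = ⋃ t ∈ Finset.Icc 1 s, E t)
    (hmono : ∀ s, ∀ α α' : ℝ, 0 < α → α ≤ α' →
      μ[|{ω | P ω ≤ α}] (A s) ≤ μ[|{ω | P ω ≤ α'}] (A s)) :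
    (∀ s : ℕ, 1 ≤ s → s < M →
      μ[|{ω | P ω ≤ s * β}] (A s) + μ[|{ω | P ω ≤ (s + 1) * β}] (E (s + 1))
        ≤ μ[|{ω | P ω ≤ (s + 1) * β}] (A (s + 1))) ∧
    (∑ t ∈ Finset.Icc 1 M, μ[|{ω | P ω ≤ t * β}] (E t)) ≤ μ[|{ω | P ω ≤ M * β}] (A M) ∧
    μ[|{ω | P ω ≤ M * β}] (A M) ≤ 1 := by
  have hstep : ∀ s : ℕ,
      μ[|{ω | P ω ≤ s * β}] (A s) + μ[|{ω | P ω ≤ (s + 1) * β}] (E (s + 1))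
        ≤ μ[|{ω | P ω ≤ (s + 1) * β}] (A (s + 1)) := by
    intro s
    have hmono_succ : μ[|{ω | P ω ≤ s * β}] (A s) ≤ μ[|{ω | P ω ≤ (s + 1) * β}] (A s) := by
      rcases Nat.eq_zero_or_pos s with rfl | hs
      · simp [hA]
      · exact hmono s _ _ (by positivity) (by gcongr; linarith)
    calc _ ≤ μ[|{ω | P ω ≤ (s + 1) * β}] (A s) + μ[|{ω | P ω ≤ (s + 1) * β}] (E (s + 1)) := by
          gcongr
      _ = _ := by rw [hA, hA, measure_biUnion_Icc_one_succ _ hdisj (hEmeas _)]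
  refine ⟨fun s _ _ ↦ hstep s, ?_, prob_le_one⟩
  refine Finset.sum_Icc_one_le_of_add_le (f := fun t ↦ μ[|{ω | P ω ≤ t * β}] (E t))
    (g := fun s ↦ μ[|{ω | P ω ≤ s * β}] (A s)) zero_le (fun s ↦ ?_) M
  simpa only [Nat.cast_succ] using hstep s

/-- The key induction in Appendix D, case (2) (Proposition 7.1 and inequality (20)),
abstracted: for pairwise disjoint events `E t` with `A s = ⋃_{1 ≤ t ≤ s} E t`, if
`Pr(A s | P ≤ α)` is nondecreasing in `α`, then for every `1 ≤ s < M`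
`Pr(A s | P ≤ sβ) + Pr(E (s+1) | P ≤ (s+1)β) ≤ Pr(A (s+1) | P ≤ (s+1)β)`, and hence
`Σ_{t=1}^M Pr(E t | P ≤ tβ) ≤ Pr(A M | P ≤ Mβ) ≤ 1`. -/
theorem stmt19 {Ω : Type*} [MeasurableSpace Ω] (μ : Measure Ω) [IsProbabilityMeasure μ]
    (M : ℕ) (hM : 1 ≤ M) (β : ℝ) (hβ : 0 < β) (hMβ : M * β ≤ 1)
    (P : Ω → ℝ) (hPmeas : Measurable P)
    (hpos : ∀ α : ℝ, 0 < α → α ≤ 1 → μ {ω | P ω ≤ α} ≠ 0)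
    (E : ℕ → Set Ω) (hEmeas : ∀ t, MeasurableSet (E t))
    (hdisj : ∀ t t', t ≠ t' → Disjoint (E t) (E t'))
    (A : ℕ → Set Ω) (hA : ∀ s, A s = ⋃ t ∈ Finset.Icc 1 s, E t)
    (hmono : ∀ s, ∀ α α' : ℝ, 0 < α → α ≤ α' →
      μ[|{ω | P ω ≤ α}] (A s) ≤ μ[|{ω | P ω ≤ α'}] (A s)) :
    (∀ s : ℕ, 1 ≤ s → s < M →
      μ[|{ω | P ω ≤ s * β}] (A s) + μ[|{ω | P ω ≤ (s + 1) * β}] (E (s + 1))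
        ≤ μ[|{ω | P ω ≤ (s + 1) * β}] (A (s + 1))) ∧
    (∑ t ∈ Finset.Icc 1 M, μ[|{ω | P ω ≤ t * β}] (E t)) ≤ μ[|{ω | P ω ≤ M * β}] (A M) ∧
    μ[|{ω | P ω ≤ M * β}] (A M) ≤ 1 :=
  stmt19_general μ M β hβ P E hEmeas hdisj A hA hmono
end
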